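/- arXiv:1705.09061 — 4 statements merged into one kernel-verified Lean document; each statement's English description precedes it below -/
import Mathlib

section
/- Let N be a finite set, let A ⊆ N be nonempty, let p ∈ (0,1] be a real number with |A| ≥ 1/p, and let S be a random subset of N obtained by including each element of N independently with probability p. Then the probability that simultaneously S ∩ A ≠ ∅ and |S| ≤ 4p|N| is at least 1 − 1/e − 1/4. -/
/-!
`S` misses `A` with probability `(1 - p) ^ |A| ≤ exp (-p |A|) ≤ 1/e`. Counting `|S|` as
`∑ x, [x ∈ S]` gives `E |S| = p |N|`, so by Markov's inequality `|S| > 4 p |N|` has probability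
at most `1/4`. A union bound over the two bad events finishes the proof.
-/

open MeasureTheory Finset

theorem measureReal_setOf_comp_eq_sum {Ω α : Type*} [MeasurableSpace Ω] (μ : Measure Ω)
    [IsFiniteMeasure μ] [Fintype α] (X : Ω → α) (hX : ∀ a, MeasurableSet {ω | X ω = a})
    (Q : α → Prop) [DecidablePred Q] :
    μ.real {ω | Q (X ω)} = ∑ a with Q a, μ.real {ω | X ω = a} := by
  have hpre : {ω | Q (X ω)} = X ⁻¹' ↑(univ.filter Q) := by ext; simp
  rw [hpre, ← sum_measureReal_preimage_singleton _ fun a _ => hX a]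
  rfl

theorem sum_sub_sum_filter_not_sub_sum_filter_not_le {α : Type*} (s : Finset α) {f : α → ℝ}
    (hf : ∀ a ∈ s, 0 ≤ f a) (P R : α → Prop) [DecidablePred P] [DecidablePred R] :
    ∑ a ∈ s, f a - ∑ a ∈ s with ¬P a, f a - ∑ a ∈ s with ¬R a, f a ≤
      ∑ a ∈ s with P a ∧ R a, f a := by
  simp only [sum_filter, sub_le_iff_le_add, ← sum_add_distrib]
  refine sum_le_sum fun a ha => ?_
  have := hf a ha
  split_ifs <;> first | linarith | tauto

theorem sum_filter_lt_le_div {α : Type*} (s : Finset α) {f g : α → ℝ}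
    (hf : ∀ a ∈ s, 0 ≤ f a) (hg : ∀ a ∈ s, 0 ≤ g a) {c : ℝ} (hc : 0 < c) :
    ∑ a ∈ s with c < g a, f a ≤ (∑ a ∈ s, g a * f a) / c := by
  rw [le_div_iff₀ hc, sum_mul]
  calc ∑ a ∈ s with c < g a, f a * c
      ≤ ∑ a ∈ s with c < g a, g a * f a := by
        refine sum_le_sum fun a ha => ?_
        rw [mem_filter] at ha
        nlinarith [hf a ha.1]
    _ ≤ ∑ a ∈ s, g a * f a :=
        sum_le_sum_of_subset_of_nonneg (filter_subset _ _)
          fun a ha _ => mul_nonneg (hg a ha) (hf a ha)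

theorem one_sub_pow_le_inv_exp_one {p : ℝ} {k : ℕ} (hp : p ≤ 1) (hk : 1 ≤ p * k) :
    (1 - p) ^ k ≤ 1 / Real.exp 1 :=
  calc (1 - p) ^ k ≤ Real.exp (-p) ^ k :=
        pow_le_pow_left₀ (by linarith) (by linarith [Real.add_one_le_exp (-p)]) k
    _ = Real.exp (-(p * k)) := by rw [← Real.exp_nat_mul]; ring_nf
    _ ≤ 1 / Real.exp 1 := by rw [one_div, ← Real.exp_neg]; exact Real.exp_le_exp.2 (by linarith)

section BernoulliWeight

variable {N : Type*} [Fintype N]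

def bernoulliWeight (p : ℝ) (F : Finset N) : ℝ :=
  p ^ #F * (1 - p) ^ (Fintype.card N - #F)

theorem bernoulliWeight_nonneg {p : ℝ} (hp0 : 0 ≤ p) (hp1 : p ≤ 1) (F : Finset N) :
    0 ≤ bernoulliWeight p F :=
  mul_nonneg (pow_nonneg hp0 _) (pow_nonneg (by linarith) _)

theorem sum_bernoulliWeight_disjoint [DecidableEq N] (p : ℝ) (B : Finset N) :
    ∑ F with Disjoint F B, bernoulliWeight p F = (1 - p) ^ #B := by
  have hfilter : univ.filter (Disjoint · B) = Bᶜ.powerset := by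
    ext F; simp [subset_compl_iff_disjoint_right]
  have hsplit : ∀ F ∈ Bᶜ.powerset,
      bernoulliWeight p F = (1 - p) ^ #B * (p ^ #F * (1 - p) ^ (#Bᶜ - #F)) := by
    intro F hF
    have hF : #F ≤ #Bᶜ := card_le_card (mem_powerset.1 hF)
    have hB : #Bᶜ + #B = Fintype.card N := by rw [card_compl]; have := card_le_univ B; omega
    rw [bernoulliWeight, show Fintype.card N - #F = #B + (#Bᶜ - #F) by omega, pow_add]
    ring
  rw [hfilter, sum_congr rfl hsplit, ← mul_sum, sum_pow_mul_eq_add_pow, add_sub_cancel, one_pow,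
    mul_one]

theorem sum_bernoulliWeight (p : ℝ) : ∑ F : Finset N, bernoulliWeight p F = 1 := by
  simpa [bernoulliWeight] using Fintype.sum_pow_mul_eq_add_pow N p (1 - p)

theorem sum_bernoulliWeight_mem [DecidableEq N] (p : ℝ) (x : N) :
    ∑ F with x ∈ F, bernoulliWeight p F = p := by
  have hmiss := sum_bernoulliWeight_disjoint p {x}
  simp only [disjoint_singleton_right, card_singleton, pow_one] at hmiss
  linarith [sum_filter_add_sum_filter_not univ (x ∈ ·) (bernoulliWeight p),
    sum_bernoulliWeight (N := N) p]

theorem sum_card_mul_bernoulliWeight (p : ℝ) :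
    ∑ F : Finset N, (#F : ℝ) * bernoulliWeight p F = Fintype.card N * p := by
  classical
  calc ∑ F : Finset N, (#F : ℝ) * bernoulliWeight p F
      = ∑ F : Finset N, ∑ x ∈ F, bernoulliWeight p F := by simp
    _ = ∑ x : N, ∑ F with x ∈ F, bernoulliWeight p F := sum_comm' (by simp)
    _ = Fintype.card N * p := by simp [sum_bernoulliWeight_mem]

theorem sum_bernoulliWeight_card_gt_le {p c : ℝ} (hp0 : 0 ≤ p) (hp1 : p ≤ 1) (hc : 0 < c) :
    ∑ F : Finset N with c < (#F : ℝ), bernoulliWeight p F ≤ Fintype.card N * p / c := by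
  rw [← sum_card_mul_bernoulliWeight]
  exact sum_filter_lt_le_div _ (fun F _ => bernoulliWeight_nonneg hp0 hp1 F)
    (fun F _ => Nat.cast_nonneg _) hc

end BernoulliWeight

theorem random_subset_hits_and_small_general
    {Ω : Type*} [MeasurableSpace Ω] (μ : Measure Ω) [IsProbabilityMeasure μ]
    {N : Type*} [Fintype N] [DecidableEq N]
    (A : Finset N)
    (p : ℝ) (hp0 : 0 < p) (hp1 : p ≤ 1) (hpA : 1 / p ≤ (A.card : ℝ))
    (S : Ω → Finset N)
    (hmeas : ∀ F : Finset N, MeasurableSet {ω | S ω = F})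
    (hdist : ∀ F : Finset N, (μ {ω | S ω = F}).toReal =
      p ^ F.card * (1 - p) ^ (Fintype.card N - F.card)) :
    1 - 1 / Real.exp 1 - 1 / 4 ≤
      (μ {ω | (S ω ∩ A).Nonempty ∧ ((S ω).card : ℝ) ≤ 4 * p * (Fintype.card N : ℝ)}).toReal := by
  have hA : 1 ≤ p * #A := by rwa [div_le_iff₀' hp0] at hpA
  have hN : 0 < (Fintype.card N : ℝ) :=
    (one_div_pos.2 hp0).trans_le <| hpA.trans <| by exact_mod_cast card_le_univ A
  have hmiss :
      ∑ F : Finset N with ¬(F ∩ A).Nonempty, bernoulliWeight p F ≤ 1 / Real.exp 1 := by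
    simp only [not_nonempty_iff_eq_empty, ← disjoint_iff_inter_eq_empty,
      sum_bernoulliWeight_disjoint]
    exact one_sub_pow_le_inv_exp_one hp1 hA
  have hbig : ∑ F : Finset N with ¬(#F : ℝ) ≤ 4 * p * Fintype.card N,
      bernoulliWeight p F ≤ 1 / 4 := by
    simp only [not_le]
    refine (sum_bernoulliWeight_card_gt_le hp0.le hp1 (by positivity)).trans_eq ?_
    field_simp
  have hwin := measureReal_setOf_comp_eq_sum μ S hmeas
    (fun F => (F ∩ A).Nonempty ∧ (#F : ℝ) ≤ 4 * p * Fintype.card N)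
  simp only [show ∀ F, μ.real {ω | S ω = F} = bernoulliWeight p F from hdist] at hwin
  rw [← measureReal_def, hwin]
  linarith [sum_bernoulliWeight (N := N) p, sum_sub_sum_filter_not_sub_sum_filter_not_le univ
    (fun F _ => bernoulliWeight_nonneg hp0.le hp1 F) (fun F => (F ∩ A).Nonempty)
    (fun F => (#F : ℝ) ≤ 4 * p * Fintype.card N)]

/-- **Sampling lemma underlying Algorithm `A₁`.**
Let `N` be a finite set, `A ⊆ N` nonempty, `p ∈ (0,1]` a real number with `|A| ≥ 1/p`,
and let `S` be a random subset of `N` obtained by including each element of `N`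
independently with probability `p`.  Then the probability that simultaneously
`S ∩ A ≠ ∅` and `|S| ≤ 4 p |N|` is at least `1 - 1/e - 1/4`. -/
theorem random_subset_hits_and_small
    {Ω : Type*} [MeasurableSpace Ω] (μ : Measure Ω) [IsProbabilityMeasure μ]
    {N : Type*} [Fintype N] [DecidableEq N]
    (A : Finset N) (hA : A.Nonempty)
    (p : ℝ) (hp0 : 0 < p) (hp1 : p ≤ 1) (hpA : 1 / p ≤ (A.card : ℝ))
    (S : Ω → Finset N)
    (hmeas : ∀ F : Finset N, MeasurableSet {ω | S ω = F})
    (hdist : ∀ F : Finset N, (μ {ω | S ω = F}).toReal =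
      p ^ F.card * (1 - p) ^ (Fintype.card N - F.card)) :
    1 - 1 / Real.exp 1 - 1 / 4 ≤
      (μ {ω | (S ω ∩ A).Nonempty ∧ ((S ω).card : ℝ) ≤ 4 * p * (Fintype.card N : ℝ)}).toReal :=
  random_subset_hits_and_small_general μ A p hp0 hp1 hpA S hmeas hdist
end

section
/- Let G = (V, E) be a simple graph on n vertices and let ε be a real number with 0 ≤ ε ≤ 1. Let X be a random subset of V obtained by including each vertex independently with probability 1/(9n^ε). Let t = {j,k,l} be a triangle of G each of whose three edges e satisfies m(e) < n^ε. Then with probability at least 2/3 all three edges of t lie in Δ(X). -/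
/-!
A vertex `x` keeps an edge of `t = {j,k,l}` out of `Δ(X)` exactly when `x ∈ X` is a common
neighbour of two vertices of `t`. There are at most `m(jk) + m(jl) + m(kl) < 3 n^ε` such
vertices, each of which lies in `X` with probability `p = 1/(9 n^ε)`, so by the union bound
`X` avoids all of them with probability at least `1 - 3 n^ε p = 2/3`.
-/

open MeasureTheory

/-- `m({j,l})`: the number of common neighbors of `j` and `l` in `G`. -/
def commonNbrs {V : Type*} [Fintype V] (G : SimpleGraph V) [DecidableRel G.Adj]
    (j l : V) : ℕ :=
  (Finset.univ.filter fun k => G.Adj j k ∧ G.Adj l k).card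

/-- `{u,v} ∈ Δ(X)`: no vertex of `X` is adjacent to both `u` and `v`. -/
def inDelta {V : Type*} (G : SimpleGraph V) (X : Finset V) (u v : V) : Prop :=
  ∀ x ∈ X, ¬ (G.Adj x u ∧ G.Adj x v)

open Finset

theorem Fintype.sum_mem_pow_mul_eq_mul_add_pow {V R : Type*} [Fintype V] [DecidableEq V]
    [CommSemiring R] (p q : R) (v : V) :
    ∑ F : Finset V with v ∈ F, p ^ #F * q ^ (Fintype.card V - #F) =
      p * (p + q) ^ (Fintype.card V - 1) := by
  set s := univ.erase v
  have hv : v ∉ s := notMem_erase v univ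
  have hcard : Fintype.card V = #s + 1 := by
    rw [card_erase_of_mem (mem_univ v), card_univ,
      Nat.sub_add_cancel (Fintype.card_pos_iff.2 ⟨v⟩)]
  rw [sum_filter, ← powerset_univ, ← insert_erase (mem_univ v), sum_powerset_insert hv]
  have hsub : ∀ t ∈ s.powerset, v ∉ t := fun t ht hvt => hv (mem_powerset.1 ht hvt)
  rw [sum_ite_of_false hsub, sum_ite_of_true fun t _ => mem_insert_self v t, sum_const_zero,
    zero_add, hcard, Nat.add_sub_cancel, ← Finset.sum_pow_mul_eq_add_pow, mul_sum]
  refine Finset.sum_congr rfl fun t ht => ?_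
  rw [card_insert_of_notMem (hsub t ht), Nat.add_sub_add_right, pow_succ]
  ring

section BinomialRandomSubset

variable {Ω V : Type*} [MeasurableSpace Ω] {μ : Measure Ω} [Fintype V] {X : Ω → Finset V}
  {p q : ℝ}

theorem measureReal_mem_eq_of_binomial [IsFiniteMeasure μ]
    (hmeas : ∀ F : Finset V, MeasurableSet {ω | X ω = F})
    (hdist : ∀ F : Finset V, μ.real {ω | X ω = F} = p ^ #F * q ^ (Fintype.card V - #F))
    (hpq : p + q = 1) (v : V) :
    μ.real {ω | v ∈ X ω} = p := by
  classical
  have hpre : {ω | v ∈ X ω} = X ⁻¹' ↑({F | v ∈ F} : Finset (Finset V)) := by ext; simp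
  rw [hpre, ← sum_measureReal_preimage_singleton _ fun F _ => hmeas F]
  refine (Finset.sum_congr rfl fun F _ => hdist F).trans ?_
  rw [Fintype.sum_mem_pow_mul_eq_mul_add_pow, hpq, one_pow, mul_one]

theorem one_sub_card_mul_le_measureReal_disjoint_of_binomial [IsProbabilityMeasure μ]
    (hmeas : ∀ F : Finset V, MeasurableSet {ω | X ω = F})
    (hdist : ∀ F : Finset V, μ.real {ω | X ω = F} = p ^ #F * q ^ (Fintype.card V - #F))
    (hpq : p + q = 1) (B : Finset V) :
    1 - #B * p ≤ μ.real {ω | Disjoint B (X ω)} := by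
  set A := {ω | Disjoint B (X ω)}
  have hAc : Aᶜ = ⋃ v ∈ B, {ω | v ∈ X ω} := by ext; simp [A, Finset.not_disjoint_iff]
  have hunion : μ.real Aᶜ ≤ #B * p := by
    rw [hAc]
    refine (measureReal_biUnion_finset_le B _).trans_eq ?_
    simp [measureReal_mem_eq_of_binomial hmeas hdist hpq]
  have htotal : 1 ≤ μ.real A + μ.real Aᶜ := by
    calc 1 = μ.real (A ∪ Aᶜ) := by rw [Set.union_compl_self, probReal_univ]
      _ ≤ μ.real A + μ.real Aᶜ := measureReal_union_le _ _
  linarith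

end BinomialRandomSubset

section CommonNeighbors

variable {V : Type*} [Fintype V] (G : SimpleGraph V) [DecidableRel G.Adj]

def commonNbrFinset (u v : V) : Finset V := {x | G.Adj u x ∧ G.Adj v x}

theorem inDelta_iff_disjoint_commonNbrFinset (X : Finset V) (u v : V) :
    inDelta G X u v ↔ Disjoint (commonNbrFinset G u v) X := by
  simp [inDelta, commonNbrFinset, Finset.disjoint_right, G.adj_comm]

theorem card_commonNbrFinset_union_le [DecidableEq V] (j k l : V) :
    #(commonNbrFinset G j k ∪ commonNbrFinset G j l ∪ commonNbrFinset G k l) ≤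
      commonNbrs G j k + commonNbrs G j l + commonNbrs G k l :=
  (card_union_le _ _).trans (Nat.add_le_add_right (card_union_le _ _) _)

end CommonNeighbors

theorem light_triangle_edges_in_Delta_general
    {Ω : Type*} [MeasurableSpace Ω] (μ : Measure Ω) [IsProbabilityMeasure μ]
    {V : Type*} [Fintype V]
    (G : SimpleGraph V) [DecidableRel G.Adj]
    (n : ℕ) (hn : n = Fintype.card V)
    (ε : ℝ)
    (X : Ω → Finset V)
    (hmeas : ∀ F : Finset V, MeasurableSet {ω | X ω = F})
    (hdist : ∀ F : Finset V, (μ {ω | X ω = F}).toReal =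
      (1 / (9 * (n : ℝ) ^ ε)) ^ F.card *
        (1 - 1 / (9 * (n : ℝ) ^ ε)) ^ (n - F.card))
    (j k l : V)
    (hlight_jk : (commonNbrs G j k : ℝ) < (n : ℝ) ^ ε)
    (hlight_jl : (commonNbrs G j l : ℝ) < (n : ℝ) ^ ε)
    (hlight_kl : (commonNbrs G k l : ℝ) < (n : ℝ) ^ ε) :
    2 / 3 ≤ (μ {ω | inDelta G (X ω) j k ∧ inDelta G (X ω) j l ∧
      inDelta G (X ω) k l}).toReal := by
  classical
  subst hn
  set p : ℝ := 1 / (9 * (Fintype.card V : ℝ) ^ ε)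
  have hpow_pos : 0 < (Fintype.card V : ℝ) ^ ε :=
    Real.rpow_pos_of_pos (Nat.cast_pos.2 (Fintype.card_pos_iff.2 ⟨j⟩)) ε
  set B := commonNbrFinset G j k ∪ commonNbrFinset G j l ∪ commonNbrFinset G k l
  have hB : (#B : ℝ) ≤ 3 * (Fintype.card V : ℝ) ^ ε := by
    have hcard : (#B : ℝ) ≤ commonNbrs G j k + commonNbrs G j l + commonNbrs G k l := by
      exact_mod_cast card_commonNbrFinset_union_le G j k l
    linarith
  have hevent : {ω | inDelta G (X ω) j k ∧ inDelta G (X ω) j l ∧ inDelta G (X ω) k l} =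
      {ω | Disjoint B (X ω)} := by
    simp only [B, inDelta_iff_disjoint_commonNbrFinset, disjoint_union_left, and_assoc]
  calc (2 : ℝ) / 3 = 1 - 3 * (Fintype.card V : ℝ) ^ ε * p := by
        simp only [p]; field_simp; norm_num
    _ ≤ 1 - #B * p := by gcongr
    _ ≤ μ.real {ω | Disjoint B (X ω)} :=
      one_sub_card_mul_le_measureReal_disjoint_of_binomial hmeas hdist (add_sub_cancel p 1) B
    _ = _ := by rw [hevent]; rfl

/-- **Lemma 2 of the paper.**
Let `G = (V,E)` be a simple graph on `n` vertices, `0 ≤ ε ≤ 1`, and let `X` be a random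
subset of `V` obtained by including each vertex independently with probability
`1/(9 n^ε)`.  If `t = {j,k,l}` is a triangle of `G` each of whose three edges `e`
satisfies `m(e) < n^ε`, then with probability at least `2/3` all three edges of `t`
lie in `Δ(X)`. -/
theorem light_triangle_edges_in_Delta
    {Ω : Type*} [MeasurableSpace Ω] (μ : Measure Ω) [IsProbabilityMeasure μ]
    {V : Type*} [Fintype V] [DecidableEq V]
    (G : SimpleGraph V) [DecidableRel G.Adj]
    (n : ℕ) (hn : n = Fintype.card V)
    (ε : ℝ) (hε0 : 0 ≤ ε) (hε1 : ε ≤ 1)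
    (X : Ω → Finset V)
    (hmeas : ∀ F : Finset V, MeasurableSet {ω | X ω = F})
    (hdist : ∀ F : Finset V, (μ {ω | X ω = F}).toReal =
      (1 / (9 * (n : ℝ) ^ ε)) ^ F.card *
        (1 - 1 / (9 * (n : ℝ) ^ ε)) ^ (n - F.card))
    (j k l : V) (hjk : G.Adj j k) (hjl : G.Adj j l) (hkl : G.Adj k l)
    (hlight_jk : (commonNbrs G j k : ℝ) < (n : ℝ) ^ ε)
    (hlight_jl : (commonNbrs G j l : ℝ) < (n : ℝ) ^ ε)
    (hlight_kl : (commonNbrs G k l : ℝ) < (n : ℝ) ^ ε) :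
    2 / 3 ≤ (μ {ω | inDelta G (X ω) j k ∧ inDelta G (X ω) j l ∧
      inDelta G (X ω) k l}).toReal :=
  light_triangle_edges_in_Delta_general μ G n hn ε X hmeas hdist j k l hlight_jk hlight_jl hlight_kl
end

section
/- Let V = {0,…,n−1} and let 𝓔 be the set of unordered pairs of elements of V, with M = |𝓔| = n(n−1)/2. On a probability space, let (e_f)_{f∈𝓔} be independent random variables, each uniform on {0,1}, let E denote their joint tuple, and let G be the random graph with vertex set V and edge set {f : e_f = 1}. Let T be any random variable taking values in finite sets of 3-element subsets of V such that almost surely every element of T is a triangle of G. Then the mutual information between E and T, measured in bits, satisfies I(E; T) ≥ 𝔼[|P(T)|], where P(T) is the set of pairs f ∈ 𝓔 contained in at least one element of T. -/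
/-!
Conditioning on `T = R`, the mutual information splits as
`I(E; T) = ∑_R P(T = R) · (M - H(E | T = R))`, since `E` is uniform on `2 ^ M` values.
Given `T = R`, almost surely every pair of `P(R)` is an edge, so the conditional law of `E`
is carried by at most `2 ^ (M - |P(R)|)` graphs and has entropy at most `M - |P(R)|`.
-/

open MeasureTheory

/-- The set `𝓔` of unordered pairs of distinct elements of `V = {0,…,n-1}`
(the potential edges of a graph on `V`). -/
abbrev EdgeIdx (n : ℕ) := {e : Sym2 (Fin n) // ¬ e.IsDiag}

/-- Adjacency in the graph on `V = {0,…,n-1}` whose edge set is encoded by the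
indicator function `g : 𝓔 → {0,1}`. -/
def gAdj {n : ℕ} (g : EdgeIdx n → Bool) (u v : Fin n) : Prop :=
  ∃ e : EdgeIdx n, e.val = s(u, v) ∧ g e = true

instance {n : ℕ} (g : EdgeIdx n → Bool) (u v : Fin n) : Decidable (gAdj g u v) := by
  unfold gAdj; infer_instance

/-- `s` is a triangle of the graph encoded by the edge indicators `g`. -/
def isTriangle {n : ℕ} (g : EdgeIdx n → Bool) (s : Finset (Fin n)) : Prop :=
  s.card = 3 ∧ ∀ u ∈ s, ∀ v ∈ s, u ≠ v → gAdj g u v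

instance {n : ℕ} (g : EdgeIdx n → Bool) (s : Finset (Fin n)) :
    Decidable (isTriangle g s) := by unfold isTriangle; infer_instance

/-- `P(R)`: the set of pairs `f ∈ 𝓔` contained in at least one member of `R`. -/
def coveredPairs {n : ℕ} (R : Finset (Finset (Fin n))) : Finset (EdgeIdx n) :=
  Finset.univ.filter fun e => ∃ s ∈ R, e.val ∈ s.sym2

/-- The Shannon mutual information `I(A; B)`, measured in bits, of two finitely-valued
random variables `A` and `B` on a probability space `(Ω, μ)`. -/
noncomputable def mutualInfo {Ω α β : Type*} [MeasurableSpace Ω] (μ : Measure Ω)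
    [Fintype α] [Fintype β] (A : Ω → α) (B : Ω → β) : ℝ :=
  ∑ a : α, ∑ b : β,
    (μ {ω | A ω = a ∧ B ω = b}).toReal *
      Real.logb 2 ((μ {ω | A ω = a ∧ B ω = b}).toReal /
        ((μ {ω | A ω = a}).toReal * (μ {ω | B ω = b}).toReal))

open Real Finset

namespace Real

lemma mul_log_div_le {a A N : ℝ} (ha : 0 ≤ a) (haA : a ≤ A) (hN : 0 < N) :
    a * log (A / a) ≤ a * log N + (A / N - a) := by
  rcases ha.eq_or_lt with rfl | ha
  · simpa using div_nonneg haA hN.le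
  have hx : 0 < A / (a * N) := div_pos (ha.trans_le haA) (mul_pos ha hN)
  have hsplit : A / a = A / (a * N) * N := by field_simp
  rw [hsplit, log_mul hx.ne' hN.ne', mul_add, add_comm]
  calc a * log N + a * log (A / (a * N)) ≤ a * log N + a * (A / (a * N) - 1) := by
        gcongr; exact log_le_sub_one_of_pos hx
    _ = a * log N + (A / N - a) := by field_simp

lemma sum_mul_log_div_le {ι : Type*} (s : Finset ι) (a : ι → ℝ) (ha : ∀ i ∈ s, 0 ≤ a i)
    {N : ℝ} (hN : 0 < N) (hs : (#s : ℝ) ≤ N) :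
    ∑ i ∈ s, a i * log ((∑ j ∈ s, a j) / a i) ≤ (∑ j ∈ s, a j) * log N := by
  set A := ∑ j ∈ s, a j
  have hA : 0 ≤ A := sum_nonneg ha
  have hmass : #s * (A / N) ≤ A :=
    calc #s * (A / N) ≤ N * (A / N) := by gcongr
      _ = A := mul_div_cancel₀ A hN.ne'
  calc ∑ i ∈ s, a i * log (A / a i) ≤ ∑ i ∈ s, (a i * log N + (A / N - a i)) :=
        sum_le_sum fun i hi => mul_log_div_le (ha i hi) (single_le_sum ha hi) hN
    _ = A * log N + (#s * (A / N) - A) := by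
        rw [sum_add_distrib, sum_sub_distrib, ← sum_mul, sum_const, nsmul_eq_mul]
    _ ≤ A * log N := by linarith

lemma sum_mul_logb_div_le {ι : Type*} {b : ℝ} (hb : 1 < b) (s : Finset ι) (a : ι → ℝ)
    (ha : ∀ i ∈ s, 0 ≤ a i) {N : ℝ} (hN : 0 < N) (hs : (#s : ℝ) ≤ N) :
    ∑ i ∈ s, a i * logb b ((∑ j ∈ s, a j) / a i) ≤ (∑ j ∈ s, a j) * logb b N := by
  simp only [logb, ← mul_div_assoc, ← sum_div]
  exact div_le_div_of_nonneg_right (sum_mul_log_div_le s a ha hN hs) (log_pos hb).le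

/-- The right side is the total mass of `a` times the relative entropy (in bits) of `a / ∑ a`
with respect to the uniform distribution on `2 ^ m` points. -/
lemma mul_le_sum_mul_logb_div_of_support {ι : Type*} [Fintype ι] (a : ι → ℝ)
    (ha : ∀ i, 0 ≤ a i) (s : Finset ι) (hs : ∀ i ∉ s, a i = 0) {k m : ℕ}
    (hcard : #s * 2 ^ k ≤ 2 ^ m) :
    (∑ i, a i) * k ≤ ∑ i, a i * logb 2 (a i / ((1 / 2) ^ m * ∑ j, a j)) := by
  have hsum_s : ∀ f : ℝ → ℝ, f 0 = 0 → ∑ i, f (a i) = ∑ i ∈ s, f (a i) := fun f hf =>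
    (sum_subset (subset_univ s) fun i _ hi => by rw [hs i hi, hf]).symm
  rw [hsum_s (fun x => x) rfl]
  set A := ∑ i ∈ s, a i
  have hterm : ∀ i ∈ s, a i * logb 2 (a i / ((1 / 2) ^ m * A)) =
      m * a i - a i * logb 2 (A / a i) := by
    intro i hi
    rcases (ha i).eq_or_lt with h0 | hpos
    · simp [← h0]
    have hA : 0 < A := hpos.trans_le (single_le_sum (fun j _ => ha j) hi)
    have hratio : a i / ((1 / 2) ^ m * A) = 2 ^ m / (A / a i) := by
      rw [one_div, inv_pow]; field_simp
    rw [hratio, logb_div (by positivity) (by positivity), logb_pow, logb_self_eq_one one_lt_two]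
    ring
  have hN : (#s : ℝ) ≤ 2 ^ m / 2 ^ k := by
    rw [le_div_iff₀ (by positivity)]; exact_mod_cast hcard
  have hgibbs := sum_mul_logb_div_le one_lt_two s a (fun i _ => ha i) (by positivity) hN
  rw [logb_div (by positivity) (by positivity), logb_pow, logb_pow,
    logb_self_eq_one one_lt_two] at hgibbs
  rw [hsum_s (fun x => x * logb 2 (x / ((1 / 2) ^ m * A))) (by simp), sum_congr rfl hterm,
    sum_sub_distrib, ← mul_sum]
  linarith

end Real

lemma card_filter_forall_eq_true_mul_le {α : Type*} [Fintype α] [DecidableEq α]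
    (C : Finset α) : #{g : α → Bool | ∀ a ∈ C, g a = true} * 2 ^ #C ≤ 2 ^ Fintype.card α := by
  have hinj : Set.InjOn (fun (g : α → Bool) (a : {a // a ∉ C}) => g a)
      {g : α → Bool | ∀ a ∈ C, g a = true} := by
    intro g hg g' hg' hgg'
    funext a
    by_cases ha : a ∈ C
    · rw [hg a ha, hg' a ha]
    · exact congrFun hgg' ⟨a, ha⟩
  have hcard : #{g : α → Bool | ∀ a ∈ C, g a = true} ≤ 2 ^ (Fintype.card α - #C) := by
    calc _ ≤ #(univ : Finset ({a // a ∉ C} → Bool)) :=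
          card_le_card_of_injOn _ (fun _ _ => mem_univ _) (by simpa using hinj)
      _ = 2 ^ (Fintype.card α - #C) := by
          simp [Fintype.card_subtype_compl]
  calc _ ≤ 2 ^ (Fintype.card α - #C) * 2 ^ #C := Nat.mul_le_mul_right _ hcard
    _ = 2 ^ Fintype.card α := by rw [← pow_add, Nat.sub_add_cancel (card_le_univ C)]

lemma eq_true_of_mem_coveredPairs {n : ℕ} {g : EdgeIdx n → Bool} {R : Finset (Finset (Fin n))}
    (hR : ∀ s ∈ R, isTriangle g s) {e : EdgeIdx n} (he : e ∈ coveredPairs R) : g e = true := by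
  obtain ⟨s, hsR, hes⟩ : ∃ s ∈ R, e.val ∈ s.sym2 := by simpa [coveredPairs] using he
  obtain ⟨z, hz⟩ := e
  induction z using Sym2.ind with
  | h u v =>
    rw [mk_mem_sym2_iff] at hes
    have huv : u ≠ v := by simpa using hz
    obtain ⟨e', he', hge'⟩ := (hR s hsR).2 u hes.1 v hes.2 huv
    exact (Subtype.ext he' : e' = ⟨s(u, v), hz⟩) ▸ hge'

section Probability

variable {Ω : Type*} [MeasurableSpace Ω] (μ : Measure Ω)

lemma toReal_measure_eq_sum_fiber {α : Type*} [Fintype α] [IsFiniteMeasure μ] (X : Ω → α)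
    (hX : ∀ a, MeasurableSet {ω | X ω = a}) (p : Ω → Prop) :
    (μ {ω | p ω}).toReal = ∑ a, (μ {ω | X ω = a ∧ p ω}).toReal := by
  rw [← ENNReal.toReal_sum fun a _ => measure_ne_top μ _]
  congr 1
  have := sum_measure_preimage_singleton (μ := μ.restrict {ω | p ω}) univ fun a _ => hX a
  simp only [coe_univ, Set.preimage_univ, Measure.restrict_apply_univ] at this
  rw [← this]
  exact sum_congr rfl fun a _ => Measure.restrict_apply (hX a)

lemma measure_eq_zero_of_not_forall_mem_coveredPairs {n : ℕ} (E : Ω → (EdgeIdx n → Bool))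
    (T : Ω → Finset (Finset (Fin n))) (hTtri : ∀ᵐ ω ∂μ, ∀ s ∈ T ω, isTriangle (E ω) s)
    {g : EdgeIdx n → Bool} {R : Finset (Finset (Fin n))}
    (hg : ¬ ∀ e ∈ coveredPairs R, g e = true) : μ {ω | E ω = g ∧ T ω = R} = 0 := by
  refine measure_mono_null ?_ (ae_iff.mp hTtri)
  rintro ω ⟨rfl, rfl⟩ htri
  exact hg fun e he => eq_true_of_mem_coveredPairs htri he

end Probability

theorem mutualInfo_ge_expected_covered_pairs_general
    {Ω : Type*} [MeasurableSpace Ω] (μ : Measure Ω) [IsProbabilityMeasure μ]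
    (n M : ℕ) (hMcard : Fintype.card (EdgeIdx n) = M)
    (E : Ω → (EdgeIdx n → Bool))
    (hEmeas : ∀ g : EdgeIdx n → Bool, MeasurableSet {ω | E ω = g})
    (hEdist : ∀ g : EdgeIdx n → Bool,
      (μ {ω | E ω = g}).toReal = (1 / 2 : ℝ) ^ M)
    (T : Ω → Finset (Finset (Fin n)))
    (hTtri : ∀ᵐ ω ∂μ, ∀ s ∈ T ω, isTriangle (E ω) s) :
    ∑ R : Finset (Finset (Fin n)),
        (μ {ω | T ω = R}).toReal * ((coveredPairs R).card : ℝ) ≤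
      mutualInfo μ E T := by
  rw [mutualInfo, sum_comm]
  refine sum_le_sum fun R _ => ?_
  simp only [hEdist, toReal_measure_eq_sum_fiber μ E hEmeas (fun ω => T ω = R)]
  refine mul_le_sum_mul_logb_div_of_support _ (fun _ => ENNReal.toReal_nonneg)
    {g | ∀ e ∈ coveredPairs R, g e = true} (fun g hg => ?_) ?_
  · simp [measure_eq_zero_of_not_forall_mem_coveredPairs μ E T hTtri (by simpa using hg)]
  · rw [← hMcard]
    exact card_filter_forall_eq_true_mul_le _

/-- **Lemma 4 of the paper.**
Let `V = {0,…,n-1}`, `𝓔` the set of unordered pairs of elements of `V`, and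
`M = |𝓔| = n(n-1)/2`.  Let `(e_f)_{f ∈ 𝓔}` be independent random variables, each
uniform on `{0,1}`, `E` their joint tuple, and `G` the random graph with edge set
`{f : e_f = 1}`.  If `T` is a random variable taking values in finite sets of 3-element
subsets of `V` such that almost surely every element of `T` is a triangle of `G`, then
`I(E; T) ≥ 𝔼[|P(T)|]` (mutual information measured in bits). -/
theorem mutualInfo_ge_expected_covered_pairs
    {Ω : Type*} [MeasurableSpace Ω] (μ : Measure Ω) [IsProbabilityMeasure μ]
    (n M : ℕ) (hM : M = n * (n - 1) / 2) (hMcard : Fintype.card (EdgeIdx n) = M)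
    (E : Ω → (EdgeIdx n → Bool))
    (hEmeas : ∀ g : EdgeIdx n → Bool, MeasurableSet {ω | E ω = g})
    (hEdist : ∀ g : EdgeIdx n → Bool,
      (μ {ω | E ω = g}).toReal = (1 / 2 : ℝ) ^ M)
    (T : Ω → Finset (Finset (Fin n)))
    (hTmeas : ∀ R : Finset (Finset (Fin n)), MeasurableSet {ω | T ω = R})
    (hTtri : ∀ᵐ ω ∂μ, ∀ s ∈ T ω, isTriangle (E ω) s) :
    ∑ R : Finset (Finset (Fin n)),
        (μ {ω | T ω = R}).toReal * ((coveredPairs R).card : ℝ) ≤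
      mutualInfo μ E T :=
  mutualInfo_ge_expected_covered_pairs_general μ n M hMcard E hEmeas hEdist T hTtri
end

section
/- Let V = {0,…,n−1} with n ≥ 3, let E be the tuple of independent uniform {0,1}-valued edge indicators of the random graph G = G(n,1/2), and let N = n(n−1)(n−2)/6. Let T₀, T₁, …, T_{n−1} be random variables, each taking values in finite sets of 3-element subsets of V, such that almost surely every element of every T_i is a triangle of G, and such that with probability at least 1 − 1/32 the union T₀ ∪ ⋯ ∪ T_{n−1} equals the set of all triangles of G. Let w be the (random) smallest index i maximizing |T_i|, and let S = T_w. Then the mutual information between E and S, measured in bits, satisfies I(E; S) ≥ (√2/3)·(N/(16n))^{2/3}·(1/15 − 1/32); in particular I(E; S) = Ω(n^{4/3}). -/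
open MeasureTheory

/-!
With probability at least `1/15`, `G(n,1/2)` has `N/16` triangles or more (a reverse Markov
inequality: the count averages `N/8` and never exceeds `N`); when moreover the listing succeeds,
the largest list `S` holds at least `N/(16n)` triangles. A family of `t` triangles covers at least
`(t/2)^{2/3}` pairs, since a graph with `m` edges has at most `2 m^{3/2}` triangles: a vertex of
degree `d ≤ √(2m)` lies in at most `d √(2m) / 2` of them, and at most `√(2m)` vertices have larger
degree. Revealing `S` reveals that all covered pairs are edges, and by the log-sum inequality a
distribution on a subcube of codimension `p` of the uniform cube lies `p` bits away from uniform.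
-/

open Finset Real

theorem sub_le_mul_log_div {a c : ℝ} (ha : 0 ≤ a) (hc : 0 < c) : a - c ≤ a * log (a / c) := by
  rcases ha.eq_or_lt with rfl | ha
  · simp [hc.le]
  · have := one_sub_inv_le_log_of_pos (div_pos ha hc)
    rw [inv_div] at this
    calc a - c = a * (1 - c / a) := by field_simp
      _ ≤ a * log (a / c) := by gcongr

theorem mul_log_div_le_sum_mul_log_div {α : Type*} (s : Finset α) (a b : α → ℝ)
    (ha : ∀ i ∈ s, 0 ≤ a i) (hb : ∀ i ∈ s, 0 < b i) :
    (∑ i ∈ s, a i) * log ((∑ i ∈ s, a i) / ∑ i ∈ s, b i) ≤ ∑ i ∈ s, a i * log (a i / b i) := by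
  rcases (sum_nonneg ha).eq_or_lt with hA | hA
  · rw [← hA, zero_mul]
    exact sum_nonneg fun i hi => by rw [(sum_eq_zero_iff_of_nonneg ha).1 hA.symm i hi]; simp
  have hB : 0 < ∑ i ∈ s, b i := sum_pos hb (nonempty_of_sum_ne_zero hA.ne')
  obtain ⟨r, hr, hrpos⟩ : ∃ r, r = (∑ i ∈ s, a i) / ∑ i ∈ s, b i ∧ 0 < r := ⟨_, rfl, by positivity⟩
  -- compare `a` with the rescaled weights `b * r`, which have the same total as `a`
  have hterm : ∀ i ∈ s, a i - b i * r ≤ a i * log (a i / b i) - a i * log r := by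
    intro i hi
    have hbi := hb i hi
    rcases (ha i hi).eq_or_lt with h0 | hai
    · rw [← h0, zero_sub, zero_mul, zero_mul, sub_zero, neg_nonpos]
      positivity
    · have := sub_le_mul_log_div (ha i hi) (mul_pos hbi hrpos)
      rw [log_div hai.ne' (by positivity), log_mul hbi.ne' hrpos.ne'] at this
      rw [log_div hai.ne' hbi.ne']
      linarith
  have hsum := sum_le_sum hterm
  rw [sum_sub_distrib, sum_sub_distrib, ← sum_mul, ← sum_mul, hr, mul_div_cancel₀ _ hB.ne']
    at hsum
  linarith

theorem card_filter_forall_mem_eq_true_mul {ι : Type*} [Fintype ι] [DecidableEq ι]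
    (F : Finset ι) : #{g : ι → Bool | ∀ i ∈ F, g i = true} * 2 ^ #F = 2 ^ Fintype.card ι := by
  have : ({g : ι → Bool | ∀ i ∈ F, g i = true} : Finset (ι → Bool)) =
      Fintype.piFinset fun i => if i ∈ F then {true} else univ := by
    ext g
    simp only [mem_filter, mem_univ, true_and, Fintype.mem_piFinset]
    refine forall_congr' fun i => ?_
    split_ifs with hi <;> simp [hi]
  rw [this, Fintype.card_piFinset]
  simp only [apply_ite card, card_singleton, card_univ, Fintype.card_bool]
  rw [prod_ite, prod_const_one, prod_const, one_mul, ← pow_add, filter_not, filter_mem_eq_inter,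
    univ_inter, card_sdiff_add_card_eq_card (subset_univ F), card_univ]

theorem sum_mul_card_le_sum_mul_logb_div {ι : Type*} [Fintype ι] [DecidableEq ι] (F : Finset ι)
    (q : (ι → Bool) → ℝ) (hq : ∀ x, 0 ≤ q x) (hsupp : ∀ x, q x ≠ 0 → ∀ i ∈ F, x i = true) :
    (∑ x, q x) * #F ≤ ∑ x, q x * logb 2 (q x / ((1 / 2) ^ Fintype.card ι * ∑ x, q x)) := by
  set G : Finset (ι → Bool) := {x | ∀ i ∈ F, x i = true}
  have hG : ∀ x ∉ G, q x = 0 := fun x hx =>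
    by_contra fun h => hx (mem_filter.2 ⟨mem_univ x, hsupp x h⟩)
  have hsumG : ∑ x, q x = ∑ x ∈ G, q x :=
    (sum_subset (subset_univ G) fun x _ hx => hG x hx).symm
  rw [hsumG, ← sum_subset (subset_univ G) fun x _ hx => by rw [hG x hx, zero_mul]]
  rcases (sum_nonneg fun x _ => hq x : 0 ≤ ∑ x ∈ G, q x).eq_or_lt with hQ | hQ
  · rw [← hQ, zero_mul]
    exact sum_nonneg fun x hx => by
      rw [(sum_eq_zero_iff_of_nonneg fun x _ => hq x).1 hQ.symm x hx]; simp
  have hlogsum := mul_log_div_le_sum_mul_log_div G q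
    (fun _ => (1 / 2) ^ Fintype.card ι * ∑ x ∈ G, q x) (fun x _ => hq x) fun _ _ => by positivity
  have hcard : ((#G : ℕ) : ℝ) * 2 ^ #F = 2 ^ Fintype.card ι := by
    exact_mod_cast card_filter_forall_mem_eq_true_mul F
  have hratio : (∑ x ∈ G, q x) / ∑ _x ∈ G, (1 / 2 : ℝ) ^ Fintype.card ι * ∑ x ∈ G, q x =
      2 ^ #F := by
    have hG0 : ((#G : ℕ) : ℝ) ≠ 0 := fun h => by
      rw [h, zero_mul] at hcard; exact absurd hcard.symm (by positivity)
    rw [sum_const, nsmul_eq_mul, one_div_pow, ← hcard]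
    field_simp
  rw [hratio, log_pow] at hlogsum
  simp only [logb, mul_div_assoc', ← sum_div]
  rw [le_div_iff₀ (log_pos one_lt_two)]
  linarith

theorem sum_measureReal_mul_card_le_mutualInfo {Ω ι β : Type*} [MeasurableSpace Ω]
    (μ : Measure Ω) [IsFiniteMeasure μ] [Fintype ι] [DecidableEq ι] [Fintype β]
    (X : Ω → ι → Bool) (Y : Ω → β) (hXmeas : ∀ x, MeasurableSet {ω | X ω = x})
    (hYmeas : ∀ y, MeasurableSet {ω | Y ω = y})
    (hX : ∀ x, μ.real {ω | X ω = x} = (1 / 2) ^ Fintype.card ι)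
    (F : β → Finset ι) (hF : ∀ᵐ ω ∂μ, ∀ i ∈ F (Y ω), X ω i = true) :
    ∑ y, μ.real {ω | Y ω = y} * #(F y) ≤ mutualInfo μ X Y := by
  have hmarg : ∀ y, ∑ x, μ.real {ω | X ω = x ∧ Y ω = y} = μ.real {ω | Y ω = y} := by
    intro y
    have hunion : {ω | Y ω = y} =
        ⋃ x ∈ (univ : Finset (ι → Bool)), {ω | X ω = x} ∩ {ω | Y ω = y} := by
      ext ω; simp
    rw [hunion, measureReal_biUnion_finset _ fun x _ => (hXmeas x).inter (hYmeas y)]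
    · rfl
    · exact fun x _ x' _ hxx' => Set.disjoint_left.2 fun ω h h' => hxx' (h.1.symm.trans h'.1)
  have hsupp : ∀ x y, μ.real {ω | X ω = x ∧ Y ω = y} ≠ 0 → ∀ i ∈ F y, x i = true := by
    intro x y hxy
    obtain ⟨ω, ⟨hXω, hYω⟩, hω⟩ := Measure.exists_mem_of_measure_ne_zero_of_ae
      (s := {ω | X ω = x ∧ Y ω = y}) (fun h => hxy (by simp [Measure.real, h]))
      (ae_restrict_of_ae hF)
    rw [← hXω, ← hYω]
    exact hω
  have hMI : mutualInfo μ X Y = ∑ y, ∑ x, μ.real {ω | X ω = x ∧ Y ω = y} *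
      logb 2 (μ.real {ω | X ω = x ∧ Y ω = y} /
        ((1 / 2) ^ Fintype.card ι * μ.real {ω | Y ω = y})) := by
    simp only [mutualInfo, ← measureReal_def, hX]
    exact sum_comm
  rw [hMI]
  refine sum_le_sum fun y _ => ?_
  have := sum_mul_card_le_sum_mul_logb_div (F y) (fun x => μ.real {ω | X ω = x ∧ Y ω = y})
    (fun _ => measureReal_nonneg) (hsupp · y)
  rwa [hmarg] at this

theorem sum_le_mul_card_add_mul_card_filter {α : Type*} (s : Finset α) (f : α → ℝ) {θ b : ℝ}
    (hf : ∀ x ∈ s, f x ≤ b) :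
    ∑ x ∈ s, f x ≤ θ * #s + (b - θ) * #{x ∈ s | θ ≤ f x} := by
  rw [← sum_filter_add_sum_filter_not s (fun x => θ ≤ f x),
    ← card_filter_add_card_filter_not (fun x => θ ≤ f x)]
  have hhigh : ∑ x ∈ s with θ ≤ f x, f x ≤ #{x ∈ s | θ ≤ f x} * b :=
    (sum_le_card_nsmul _ _ _ fun x hx => hf x (mem_filter.1 hx).1).trans_eq (nsmul_eq_mul _ _)
  have hlow : ∑ x ∈ s with ¬θ ≤ f x, f x ≤ #{x ∈ s | ¬θ ≤ f x} * θ :=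
    (sum_le_card_nsmul _ _ _ fun x hx => (not_le.1 (mem_filter.1 hx).2).le).trans_eq
      (nsmul_eq_mul _ _)
  push_cast
  linarith

theorem measurableSet_preimage_of_measurableSet_fiber {Ω β : Type*} [MeasurableSpace Ω]
    [Countable β] {Y : Ω → β} (hY : ∀ y, MeasurableSet {ω | Y ω = y}) (A : Set β) :
    MeasurableSet (Y ⁻¹' A) := by
  rw [← Set.biUnion_preimage_singleton]
  exact MeasurableSet.biUnion A.to_countable fun y _ => hY y

theorem measureReal_le_add_one_sub {Ω : Type*} [MeasurableSpace Ω] {μ : Measure Ω}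
    [IsProbabilityMeasure μ] {A B C : Set Ω} (hB : MeasurableSet B) (hC : MeasurableSet C)
    (h : A ∩ B ⊆ C) : μ.real B ≤ μ.real C + (1 - μ.real A) := by
  have hBC : μ.real B ≤ μ.real C + μ.real (B \ C) :=
    (measureReal_mono fun ω hω => by by_cases hωC : ω ∈ C <;> simp [hωC, hω]).trans
      (measureReal_union_le C (B \ C))
  have hA : μ.real A ≤ 1 - μ.real (B \ C) := by
    rw [← probReal_compl_eq_one_sub (hB.diff hC)]
    exact measureReal_mono fun ω hA hBC => hBC.2 (h ⟨hA, hBC.1⟩)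
  linarith

namespace SimpleGraph

variable {V : Type*} [Fintype V] (G : SimpleGraph V) [DecidableRel G.Adj]

theorem card_filter_lt_degree_le {D : ℝ} (hD : 0 ≤ D) (hD2 : 2 * #G.edgeFinset ≤ D ^ 2) :
    (#{u | D < G.degree u} : ℝ) ≤ D := by
  set H : Finset V := {u | D < G.degree u}
  by_contra! hlt
  have hH : H.Nonempty := card_pos.1 (by exact_mod_cast hD.trans_lt hlt)
  have : #H * D < 2 * #G.edgeFinset := by
    calc #H * D = ∑ _u ∈ H, D := by rw [sum_const, nsmul_eq_mul]
      _ < ∑ u ∈ H, (G.degree u : ℝ) :=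
          sum_lt_sum_of_nonempty hH fun u hu => (mem_filter.1 hu).2
      _ ≤ ∑ u, (G.degree u : ℝ) := sum_le_sum_of_subset_of_nonneg (subset_univ _)
          fun _ _ _ => by positivity
      _ = 2 * #G.edgeFinset := by exact_mod_cast G.sum_degrees_eq_twice_card_edges
  nlinarith

variable [DecidableEq V]

theorem card_cliqueFinset_three_filter_mem_le (u : V) :
    #{s ∈ G.cliqueFinset 3 | u ∈ s} ≤ (G.degree u).choose 2 := by
  rw [← card_neighborFinset_eq_degree, ← card_powersetCard]
  refine card_le_card_of_injOn (fun s => s.erase u) (fun s hs => ?_) (fun s hs t ht hst => ?_)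
  · simp only [coe_filter, mem_cliqueFinset_iff] at hs
    obtain ⟨⟨hclique, hcard⟩, hu⟩ := hs
    refine mem_powersetCard.2 ⟨fun v hv => ?_, by rw [card_erase_of_mem hu, hcard]⟩
    exact (mem_neighborFinset _ _ _).2
      (hclique hu (mem_of_mem_erase hv) (ne_of_mem_erase hv).symm)
  · simp only [coe_filter] at hs ht
    simpa [insert_erase hs.2, insert_erase ht.2] using congrArg (insert u) hst

theorem card_cliqueFinset_three_le_add {D : ℝ} (hD : 0 ≤ D) :
    (#(G.cliqueFinset 3) : ℝ) ≤ D * #G.edgeFinset + (#{u | D < G.degree u} : ℝ) ^ 3 / 6 := by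
  set L : Finset V := {u | G.degree u ≤ D}
  set H : Finset V := {u | D < G.degree u}
  have hsplit : G.cliqueFinset 3 ⊆
      L.biUnion (fun u => {s ∈ G.cliqueFinset 3 | u ∈ s}) ∪ powersetCard 3 H := by
    intro s hs
    by_cases hlow : ∃ u ∈ s, G.degree u ≤ D
    · obtain ⟨u, hus, hu⟩ := hlow
      exact mem_union_left _
        (mem_biUnion.2 ⟨u, mem_filter.2 ⟨mem_univ u, hu⟩, mem_filter.2 ⟨hs, hus⟩⟩)
    · push Not at hlow
      refine mem_union_right _
        (mem_powersetCard.2 ⟨fun u hu => ?_, (mem_cliqueFinset_iff.1 hs).2⟩)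
      exact mem_filter.2 ⟨mem_univ u, hlow u hu⟩
  have hlowBound : ∑ u ∈ L, ((G.degree u).choose 2 : ℝ) ≤ D * #G.edgeFinset := by
    calc ∑ u ∈ L, ((G.degree u).choose 2 : ℝ) ≤ ∑ u ∈ L, G.degree u * D / 2 := by
          refine sum_le_sum fun u hu => ?_
          have hu : (G.degree u : ℝ) ≤ D := (mem_filter.1 hu).2
          rw [Nat.cast_choose_two]
          gcongr
          linarith
      _ ≤ ∑ u, G.degree u * D / 2 := sum_le_sum_of_subset_of_nonneg (subset_univ _)
          fun _ _ _ => by positivity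
      _ = D * #G.edgeFinset := by
          rw [← sum_div, ← sum_mul, ← Nat.cast_sum, sum_degrees_eq_twice_card_edges]
          push_cast; ring
  have hhighBound : ((#(powersetCard 3 H)) : ℝ) ≤ (#H : ℝ) ^ 3 / 6 := by
    rw [card_powersetCard]
    exact (Nat.choose_le_pow_div 3 _).trans_eq (by norm_num [Nat.factorial])
  calc (#(G.cliqueFinset 3) : ℝ)
      ≤ ∑ u ∈ L, (#{s ∈ G.cliqueFinset 3 | u ∈ s} : ℝ) + #(powersetCard 3 H) := by
        exact_mod_cast (card_le_card hsplit).trans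
          ((card_union_le _ _).trans (Nat.add_le_add_right card_biUnion_le _))
    _ ≤ ∑ u ∈ L, ((G.degree u).choose 2 : ℝ) + #(powersetCard 3 H) := by
        gcongr with u
        exact_mod_cast G.card_cliqueFinset_three_filter_mem_le u
    _ ≤ _ := add_le_add hlowBound hhighBound

theorem card_cliqueFinset_three_le :
    (#(G.cliqueFinset 3) : ℝ) ≤ 2 * (#G.edgeFinset : ℝ) ^ ((3 : ℝ) / 2) := by
  set m : ℝ := ((#G.edgeFinset : ℕ) : ℝ)
  have hm : 0 ≤ m := by positivity
  set D := √(2 * m)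
  have hD : 0 ≤ D := sqrt_nonneg _
  have hD2 : D ^ 2 = 2 * m := sq_sqrt (by positivity)
  have hsqrt2 : √2 ≤ 3 / 2 := by
    rw [sqrt_le_left (by norm_num)]; norm_num
  have hpow : m ^ ((3 : ℝ) / 2) = m * √m := by
    rw [show (3 : ℝ) / 2 = 1 + 1 / 2 by norm_num, rpow_add' hm (by norm_num), rpow_one,
      sqrt_eq_rpow]
  have hDm : D = √2 * √m := sqrt_mul (by norm_num) m
  calc (#(G.cliqueFinset 3) : ℝ) ≤ D * m + (#{u | D < G.degree u} : ℝ) ^ 3 / 6 :=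
        G.card_cliqueFinset_three_le_add hD
    _ ≤ D * m + D ^ 3 / 6 := by gcongr; exact G.card_filter_lt_degree_le hD hD2.ge
    _ = 4 / 3 * √2 * (m * √m) := by rw [pow_succ, hD2, hDm]; ring
    _ ≤ 2 * m ^ ((3 : ℝ) / 2) := by rw [hpow]; gcongr; linarith

end SimpleGraph

section CoveredPairs

variable {n : ℕ}

theorem forall_mem_coveredPairs_iff (g : EdgeIdx n → Bool) (R : Finset (Finset (Fin n))) :
    (∀ e ∈ coveredPairs R, g e = true) ↔ ∀ s ∈ R, ∀ u ∈ s, ∀ v ∈ s, u ≠ v → gAdj g u v := by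
  simp only [coveredPairs, mem_filter, mem_univ, true_and]
  constructor
  · intro h s hs u hu v hv huv
    exact ⟨⟨s(u, v), Sym2.mk_isDiag_iff.not.2 huv⟩, rfl,
      h _ ⟨s, hs, mk_mem_sym2_iff.2 ⟨hu, hv⟩⟩⟩
  · rintro h ⟨e, he⟩ ⟨s, hs, hes⟩
    induction e using Sym2.ind with
    | h u v =>
      obtain ⟨hu, hv⟩ := mk_mem_sym2_iff.1 hes
      obtain ⟨e', he', hge'⟩ := h s hs u hu v hv (Sym2.mk_isDiag_iff.not.1 he)
      rwa [show (⟨s(u, v), he⟩ : EdgeIdx n) = e' from Subtype.ext he'.symm]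

theorem isTriangle_iff_forall_mem_coveredPairs (g : EdgeIdx n → Bool) (s : Finset (Fin n)) :
    isTriangle g s ↔ #s = 3 ∧ ∀ e ∈ coveredPairs {s}, g e = true := by
  rw [forall_mem_coveredPairs_iff, isTriangle]
  simp

theorem card_coveredPairs_singleton (s : Finset (Fin n)) :
    #(coveredPairs {s}) = (#s).choose 2 := by
  rw [← Sym2.card_image_offDiag, ← card_map (Function.Embedding.subtype _)]
  congr 1
  ext z
  induction z using Sym2.ind with
  | h u v =>
    simp only [coveredPairs, mem_map, mem_filter, mem_image, mem_offDiag, mem_singleton]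
    aesop

def coveredGraph (R : Finset (Finset (Fin n))) : SimpleGraph (Fin n) :=
  SimpleGraph.fromEdgeSet (Subtype.val '' (coveredPairs R : Set (EdgeIdx n)))

theorem card_edgeFinset_coveredGraph (R : Finset (Finset (Fin n)))
    [DecidableRel (coveredGraph R).Adj] :
    #(coveredGraph R).edgeFinset = #(coveredPairs R) := by
  rw [← card_map (Function.Embedding.subtype _)]
  congr 1
  ext z
  rw [SimpleGraph.mem_edgeFinset, coveredGraph, SimpleGraph.edgeSet_fromEdgeSet, mem_map]
  aesop

theorem subset_cliqueFinset_coveredGraph {R : Finset (Finset (Fin n))} (hR : ∀ s ∈ R, #s = 3)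
    [DecidableRel (coveredGraph R).Adj] :
    R ⊆ (coveredGraph R).cliqueFinset 3 := by
  intro s hs
  refine SimpleGraph.mem_cliqueFinset_iff.2 ⟨fun u hu v hv huv => ?_, hR s hs⟩
  refine (SimpleGraph.fromEdgeSet_adj _).2
    ⟨⟨⟨s(u, v), Sym2.mk_isDiag_iff.not.2 huv⟩, ?_, rfl⟩, huv⟩
  simp only [coveredPairs, coe_filter, mem_univ, true_and, Set.mem_ofPred_eq]
  exact ⟨s, hs, mk_mem_sym2_iff.2 ⟨hu, hv⟩⟩

theorem card_le_two_mul_card_coveredPairs_rpow {R : Finset (Finset (Fin n))}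
    (hR : ∀ s ∈ R, #s = 3) :
    (#R : ℝ) ≤ 2 * (#(coveredPairs R) : ℝ) ^ ((3 : ℝ) / 2) := by
  classical
  rw [← card_edgeFinset_coveredGraph]
  exact (Nat.cast_le.2 (card_le_card (subset_cliqueFinset_coveredGraph hR))).trans
    (coveredGraph R).card_cliqueFinset_three_le

theorem sqrt_two_div_three_mul_rpow_le_card_coveredPairs {R : Finset (Finset (Fin n))}
    (hR : ∀ s ∈ R, #s = 3) {τ : ℝ} (hτ : 0 ≤ τ) (hτR : τ ≤ #R) :
    √2 / 3 * τ ^ ((2 : ℝ) / 3) ≤ #(coveredPairs R) := by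
  set p : ℝ := ((#(coveredPairs R) : ℕ) : ℝ)
  have hp : 0 ≤ p := by positivity
  have hτp : τ ^ ((2 : ℝ) / 3) ≤ 2 ^ ((2 : ℝ) / 3) * p := by
    calc τ ^ ((2 : ℝ) / 3) ≤ (2 * p ^ ((3 : ℝ) / 2)) ^ ((2 : ℝ) / 3) := by
          gcongr
          exact hτR.trans (card_le_two_mul_card_coveredPairs_rpow hR)
      _ = 2 ^ ((2 : ℝ) / 3) * p := by
          rw [mul_rpow (by norm_num) (by positivity), ← rpow_mul hp]
          norm_num
  have hsqrt2 : √2 ≤ 3 / 2 := by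
    rw [sqrt_le_left (by norm_num)]; norm_num
  have hpow2 : (2 : ℝ) ^ ((2 : ℝ) / 3) ≤ 2 := by
    simpa using rpow_le_rpow_of_exponent_le (x := 2) (by norm_num) (by norm_num : (2 : ℝ) / 3 ≤ 1)
  calc √2 / 3 * τ ^ ((2 : ℝ) / 3) ≤ √2 / 3 * (2 ^ ((2 : ℝ) / 3) * p) := by gcongr
    _ ≤ 3 / 2 / 3 * (2 * p) := by gcongr
    _ = p := by ring

theorem card_filter_isTriangle_mul_eight {s : Finset (Fin n)} (hs : #s = 3) :
    #{g | isTriangle g s} * 8 = 2 ^ Fintype.card (EdgeIdx n) := by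
  simp only [isTriangle_iff_forall_mem_coveredPairs, hs, true_and]
  rw [← card_filter_forall_mem_eq_true_mul, card_coveredPairs_singleton, hs]
  rfl

theorem card_filter_isTriangle_le (g : EdgeIdx n → Bool) :
    #{s | isTriangle g s} ≤ n.choose 3 := by
  calc #{s | isTriangle g s} ≤ #(powersetCard 3 (univ : Finset (Fin n))) :=
        card_le_card fun s hs => mem_powersetCard.2 ⟨subset_univ s, (mem_filter.1 hs).2.1⟩
    _ = n.choose 3 := by rw [card_powersetCard, card_univ, Fintype.card_fin]

theorem sum_card_filter_isTriangle_mul_eight :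
    ∑ g : EdgeIdx n → Bool, #{s | isTriangle g s} * 8 =
      n.choose 3 * 2 ^ Fintype.card (EdgeIdx n) := by
  have hswap := sum_card_bipartiteAbove_eq_sum_card_bipartiteBelow (s := univ) (t := univ)
    (r := fun (g : EdgeIdx n → Bool) (s : Finset (Fin n)) => isTriangle g s)
  simp only [bipartiteAbove, bipartiteBelow] at hswap
  rw [← sum_mul, hswap, sum_mul]
  calc ∑ s : Finset (Fin n), #{g | isTriangle g s} * 8
      = ∑ s ∈ powersetCard 3 univ, 2 ^ Fintype.card (EdgeIdx n) := by
        rw [← sum_subset (subset_univ _)]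
        · exact sum_congr rfl fun s hs =>
            card_filter_isTriangle_mul_eight (mem_powersetCard.1 hs).2
        · intro s _ hs
          rw [card_eq_zero.2, zero_mul]
          exact filter_eq_empty_iff.2 fun g _ hg =>
            hs (mem_powersetCard.2 ⟨subset_univ s, hg.1⟩)
    _ = n.choose 3 * 2 ^ Fintype.card (EdgeIdx n) := by
        rw [sum_const, card_powersetCard, card_univ, Fintype.card_fin, smul_eq_mul]

theorem two_pow_card_le_fifteen_mul_card_filter (hn : 3 ≤ n) :
    (2 : ℝ) ^ Fintype.card (EdgeIdx n) ≤
      15 * #{g : EdgeIdx n → Bool | (n.choose 3 : ℝ) / 16 ≤ #{s | isTriangle g s}} := by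
  have hN : (0 : ℝ) < n.choose 3 := by exact_mod_cast Nat.choose_pos hn
  have hsum : ∑ g : EdgeIdx n → Bool, (#{s | isTriangle g s} : ℝ) =
      n.choose 3 * 2 ^ Fintype.card (EdgeIdx n) / 8 := by
    rw [eq_div_iff (by norm_num), sum_mul]
    exact_mod_cast sum_card_filter_isTriangle_mul_eight
  have hmarkov := sum_le_mul_card_add_mul_card_filter univ
    (fun g : EdgeIdx n → Bool => (#{s | isTriangle g s} : ℝ)) (θ := n.choose 3 / 16)
    (b := n.choose 3) fun g _ => by exact_mod_cast card_filter_isTriangle_le g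
  rw [hsum, card_univ, Fintype.card_fun, Fintype.card_bool] at hmarkov
  push_cast at hmarkov
  nlinarith

theorem one_div_fifteen_le_measureReal_card_triangles {Ω : Type*} [MeasurableSpace Ω]
    (μ : Measure Ω) [IsFiniteMeasure μ] (hn : 3 ≤ n) (E : Ω → EdgeIdx n → Bool)
    (hEmeas : ∀ g, MeasurableSet {ω | E ω = g})
    (hE : ∀ g, μ.real {ω | E ω = g} = (1 / 2) ^ Fintype.card (EdgeIdx n)) :
    1 / 15 ≤ μ.real (E ⁻¹' {g | (n.choose 3 : ℝ) / 16 ≤ #{s | isTriangle g s}}) := by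
  rw [← coe_filter_univ, ← sum_measureReal_preimage_singleton _ fun g _ => hEmeas g]
  simp only [Set.preimage, Set.mem_singleton_iff, hE, sum_const, nsmul_eq_mul, one_div_pow,
    mul_one_div]
  rw [le_div_iff₀ (by positivity)]
  linarith [two_pow_card_le_fifteen_mul_card_filter hn]

theorem one_div_fifteen_sub_le_measureReal_card_ge {Ω : Type*} [MeasurableSpace Ω]
    (μ : Measure Ω) [IsProbabilityMeasure μ] (hn : 3 ≤ n) (E : Ω → EdgeIdx n → Bool)
    (hEmeas : ∀ g, MeasurableSet {ω | E ω = g})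
    (hE : ∀ g, μ.real {ω | E ω = g} = (1 / 2) ^ Fintype.card (EdgeIdx n))
    (T : Fin n → Ω → Finset (Finset (Fin n)))
    (hTlist : 1 - 1 / 32 ≤ μ.real {ω | univ.biUnion (fun i => T i ω) =
      univ.filter fun s => isTriangle (E ω) s})
    (S : Ω → Finset (Finset (Fin n))) (hSmeas : ∀ R, MeasurableSet {ω | S ω = R})
    (hST : ∀ ω i, #(T i ω) ≤ #(S ω)) :
    1 / 15 - 1 / 32 ≤ μ.real {ω | (n.choose 3 : ℝ) / (16 * n) ≤ #(S ω)} := by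
  have hsubset : {ω | univ.biUnion (fun i => T i ω) = univ.filter fun s => isTriangle (E ω) s} ∩
      E ⁻¹' {g | (n.choose 3 : ℝ) / 16 ≤ #{s | isTriangle g s}} ⊆
        {ω | (n.choose 3 : ℝ) / (16 * n) ≤ #(S ω)} := by
    rintro ω ⟨hlist, hmany : (n.choose 3 : ℝ) / 16 ≤ #{s | isTriangle (E ω) s}⟩
    have hcard : #{s | isTriangle (E ω) s} ≤ n * #(S ω) := by
      rw [← Set.mem_ofPred.1 hlist]
      simpa using card_biUnion_le_card_mul univ (fun i => T i ω) _ fun i _ => hST ω i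
    have hcard' : (#{s | isTriangle (E ω) s} : ℝ) ≤ n * #(S ω) := by exact_mod_cast hcard
    rw [Set.mem_ofPred, div_le_iff₀ (by positivity)]
    linarith
  have := measureReal_le_add_one_sub (μ := μ) (C := {ω | (n.choose 3 : ℝ) / (16 * n) ≤ #(S ω)})
    (measurableSet_preimage_of_measurableSet_fiber hEmeas _)
    (measurableSet_preimage_of_measurableSet_fiber hSmeas {R | (n.choose 3 : ℝ) / (16 * n) ≤ #R})
    hsubset
  linarith [one_div_fifteen_le_measureReal_card_triangles μ hn E hEmeas hE]

theorem measureReal_mul_le_sum_measureReal_mul_card_coveredPairs {Ω : Type*}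
    [MeasurableSpace Ω] (μ : Measure Ω) [IsFiniteMeasure μ] (S : Ω → Finset (Finset (Fin n)))
    (hSmeas : ∀ R, MeasurableSet {ω | S ω = R}) (hS3 : ∀ᵐ ω ∂μ, ∀ s ∈ S ω, #s = 3)
    {τ : ℝ} (hτ : 0 ≤ τ) :
    μ.real {ω | τ ≤ #(S ω)} * (√2 / 3 * τ ^ ((2 : ℝ) / 3)) ≤
      ∑ R, μ.real {ω | S ω = R} * #(coveredPairs R) := by
  have hsplit := sum_measureReal_preimage_singleton (μ := μ) ({R | τ ≤ #R} : Finset _)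
    fun R _ => hSmeas R
  rw [coe_filter_univ] at hsplit
  rw [show μ.real {ω | τ ≤ #(S ω)} = _ from hsplit.symm, sum_mul]
  calc ∑ R ∈ {R | τ ≤ #R}, μ.real {ω | S ω = R} * (√2 / 3 * τ ^ ((2 : ℝ) / 3))
      ≤ ∑ R ∈ {R | τ ≤ #R}, μ.real {ω | S ω = R} * #(coveredPairs R) := by
        refine sum_le_sum fun R hR => ?_
        rcases eq_or_ne (μ {ω | S ω = R}) 0 with h0 | h0
        · simp [Measure.real, h0]
        obtain ⟨ω, hSω, hω⟩ :=
          Measure.exists_mem_of_measure_ne_zero_of_ae h0 (ae_restrict_of_ae hS3)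
        refine mul_le_mul_of_nonneg_left ?_ measureReal_nonneg
        exact sqrt_two_div_three_mul_rpow_le_card_coveredPairs (fun s hs => hω s (hSω ▸ hs)) hτ
          (mem_filter.1 hR).2
    _ ≤ ∑ R, μ.real {ω | S ω = R} * #(coveredPairs R) :=
        sum_le_sum_of_subset_of_nonneg (subset_univ _) fun _ _ _ => by positivity

end CoveredPairs

theorem mutualInfo_lower_bound_listing_general
    {Ω : Type*} [MeasurableSpace Ω] (μ : Measure Ω) [IsProbabilityMeasure μ]
    (n M : ℕ) (hn : 3 ≤ n)
    (hMcard : Fintype.card (EdgeIdx n) = M)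
    (N : ℝ) (hN : N = (n : ℝ) * ((n : ℝ) - 1) * ((n : ℝ) - 2) / 6)
    (E : Ω → (EdgeIdx n → Bool))
    (hEmeas : ∀ g : EdgeIdx n → Bool, MeasurableSet {ω | E ω = g})
    (hEdist : ∀ g : EdgeIdx n → Bool,
      (μ {ω | E ω = g}).toReal = (1 / 2 : ℝ) ^ M)
    (T : Fin n → Ω → Finset (Finset (Fin n)))
    (hTtri : ∀ᵐ ω ∂μ, ∀ i : Fin n, ∀ s ∈ T i ω, isTriangle (E ω) s)
    (hTlist : 1 - 1 / 32 ≤ (μ {ω | Finset.univ.biUnion (fun i : Fin n => T i ω) =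
      Finset.univ.filter fun s : Finset (Fin n) => isTriangle (E ω) s}).toReal)
    (w : Ω → Fin n)
    (hwmax : ∀ ω : Ω, ∀ i : Fin n, (T i ω).card ≤ (T (w ω) ω).card)
    (S : Ω → Finset (Finset (Fin n))) (hS : ∀ ω : Ω, S ω = T (w ω) ω)
    (hSmeas : ∀ R : Finset (Finset (Fin n)), MeasurableSet {ω | S ω = R}) :
    Real.sqrt 2 / 3 * (N / (16 * (n : ℝ))) ^ ((2 : ℝ) / 3) * (1 / 15 - 1 / 32) ≤
      mutualInfo μ E S := by
  subst hMcard
  obtain rfl : N = n.choose 3 := by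
    rw [hN, Nat.cast_choose_eq_descPochhammer_div]
    simp [descPochhammer_succ_right, Nat.factorial]
  have hStri : ∀ᵐ ω ∂μ, ∀ s ∈ S ω, isTriangle (E ω) s :=
    hTtri.mono fun ω h s hs => h (w ω) s (hS ω ▸ hs)
  have hlarge := one_div_fifteen_sub_le_measureReal_card_ge μ hn E hEmeas hEdist T hTlist S
    hSmeas fun ω i => hS ω ▸ hwmax ω i
  calc √2 / 3 * ((n.choose 3 : ℝ) / (16 * n)) ^ ((2 : ℝ) / 3) * (1 / 15 - 1 / 32)
      ≤ μ.real {ω | (n.choose 3 : ℝ) / (16 * n) ≤ #(S ω)} *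
          (√2 / 3 * ((n.choose 3 : ℝ) / (16 * n)) ^ ((2 : ℝ) / 3)) := by
        rw [mul_comm]; gcongr
    _ ≤ ∑ R, μ.real {ω | S ω = R} * #(coveredPairs R) :=
        measureReal_mul_le_sum_measureReal_mul_card_coveredPairs μ S hSmeas
          (hStri.mono fun ω h s hs => (h s hs).1) (by positivity)
    _ ≤ mutualInfo μ E S :=
        sum_measureReal_mul_card_le_mutualInfo μ E S hEmeas hSmeas hEdist coveredPairs
          (hStri.mono fun ω h => (forall_mem_coveredPairs_iff _ _).2 fun s hs => (h s hs).2)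

/-- **Key inequality in the proof of Theorem 4 of the paper.**
Let `V = {0,…,n-1}` with `n ≥ 3`, let `E` be the tuple of independent uniform
`{0,1}`-valued edge indicators of the random graph `G = G(n, 1/2)`, and let
`N = n(n-1)(n-2)/6`.  Let `T₀, …, T_{n-1}` be random variables, each taking values in
finite sets of 3-element subsets of `V`, such that almost surely every element of every
`T_i` is a triangle of `G`, and such that with probability at least `1 - 1/32` the
union `T₀ ∪ ⋯ ∪ T_{n-1}` equals the set of all triangles of `G`.  Let `w` be the
(random) smallest index `i` maximizing `|T_i|` and `S = T_w`.  Then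
`I(E; S) ≥ (√2/3) (N/(16n))^{2/3} (1/15 - 1/32)`; in particular `I(E; S) = Ω(n^{4/3})`. -/
theorem mutualInfo_lower_bound_listing
    {Ω : Type*} [MeasurableSpace Ω] (μ : Measure Ω) [IsProbabilityMeasure μ]
    (n M : ℕ) (hn : 3 ≤ n) (hM : M = n * (n - 1) / 2)
    (hMcard : Fintype.card (EdgeIdx n) = M)
    (N : ℝ) (hN : N = (n : ℝ) * ((n : ℝ) - 1) * ((n : ℝ) - 2) / 6)
    (E : Ω → (EdgeIdx n → Bool))
    (hEmeas : ∀ g : EdgeIdx n → Bool, MeasurableSet {ω | E ω = g})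
    (hEdist : ∀ g : EdgeIdx n → Bool,
      (μ {ω | E ω = g}).toReal = (1 / 2 : ℝ) ^ M)
    (T : Fin n → Ω → Finset (Finset (Fin n)))
    (hTtri : ∀ᵐ ω ∂μ, ∀ i : Fin n, ∀ s ∈ T i ω, isTriangle (E ω) s)
    (hTlist : 1 - 1 / 32 ≤ (μ {ω | Finset.univ.biUnion (fun i : Fin n => T i ω) =
      Finset.univ.filter fun s : Finset (Fin n) => isTriangle (E ω) s}).toReal)
    (w : Ω → Fin n)
    (hwmax : ∀ ω : Ω, ∀ i : Fin n, (T i ω).card ≤ (T (w ω) ω).card)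
    (hwmin : ∀ ω : Ω, ∀ i : Fin n, (T i ω).card = (T (w ω) ω).card → w ω ≤ i)
    (S : Ω → Finset (Finset (Fin n))) (hS : ∀ ω : Ω, S ω = T (w ω) ω)
    (hSmeas : ∀ R : Finset (Finset (Fin n)), MeasurableSet {ω | S ω = R}) :
    Real.sqrt 2 / 3 * (N / (16 * (n : ℝ))) ^ ((2 : ℝ) / 3) * (1 / 15 - 1 / 32) ≤
      mutualInfo μ E S :=
  mutualInfo_lower_bound_listing_general μ n M hn hMcard N hN E hEmeas hEdist T hTtri hTlist w hwmax
    S hS hSmeas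
end
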